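/- arXiv:2403.11704 — 4 statements merged into one kernel-verified Lean document; each statement's English description precedes it below -/
import Mathlib

section
/- For two changepoint contrast vectors θ^(k), θ^(l) ∈ ℝ^n with changepoint locations m = b^k ≤ m' = b^l (both integers strictly between 0 and n), the inner product satisfies ⟨θ^(k), θ^(l)⟩ = b^{(k−l)/2} · sqrt((n − b^l)/(n − b^k)), and in particular ⟨θ^(k), θ^(l)⟩ ≤ b^{−|k−l|/2}. -/
/-!
Both contrast vectors are constant on the blocks `[0, m)`, `[m, m')`, `[m', n)`, so their inner
product is a three-term sum which simplifies to `√(m / m') * √((n - m') / (n - m))`. With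
`m = b ^ k` and `m' = b ^ l` the first factor is `b ^ ((k - l) / 2)`, and the second is at most `1`
because `m ≤ m'`.
-/

open Finset Real

theorem sum_range_ite_mul_ite {m m' n : ℕ} (hmm : m ≤ m') (hmn : m' ≤ n) (p q r s : ℝ) :
    ∑ i ∈ range n, (if i < m then p else q) * (if i < m' then r else s)
      = m * (p * r) + ((m' : ℝ) - m) * (q * r) + ((n : ℝ) - m') * (q * s) := by
  have block : ∀ {a c : ℕ} (x : ℝ) (f : ℕ → ℝ), a ≤ c → (∀ i ∈ Ico a c, f i = x) →
      ∑ i ∈ Ico a c, f i = ((c : ℝ) - a) * x := by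
    intro a c x f hac hf
    rw [sum_congr rfl hf, sum_const, Nat.card_Ico, nsmul_eq_mul, Nat.cast_sub hac]
  rw [range_eq_Ico, ← sum_Ico_consecutive _ (Nat.zero_le m') hmn,
    ← sum_Ico_consecutive _ (Nat.zero_le m) hmm,
    block (p * r) _ (Nat.zero_le m), block (q * r) _ hmm, block (q * s) _ hmn, Nat.cast_zero,
    sub_zero]
  · intro i hi
    rw [mem_Ico] at hi
    rw [if_neg (by omega), if_neg (by omega)]
  · intro i hi
    rw [mem_Ico] at hi
    rw [if_neg (by omega), if_pos hi.2]
  · intro i hi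
    rw [mem_Ico] at hi
    rw [if_pos hi.2, if_pos (by omega)]

/-- The paper's `θ^(m-changepoint)`, indexed by `ℕ` rather than `Fin n`. -/
noncomputable def changepointContrast (n m : ℕ) (t : ℕ) : ℝ :=
  if t < m then √(((n : ℝ) - m) / (n * m)) else -√((m : ℝ) / (n * ((n : ℝ) - m)))

theorem sum_changepointContrast_mul {n m m' : ℕ} (hm : 0 < m) (hmm : m ≤ m') (hmn : m' < n) :
    ∑ t ∈ range n, changepointContrast n m t * changepointContrast n m' t
      = √((m : ℝ) / m') * √(((n : ℝ) - m') / ((n : ℝ) - m)) := by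
  simp only [changepointContrast]
  rw [sum_range_ite_mul_ite hmm hmn.le]
  have ha : (0 : ℝ) < m := by exact_mod_cast hm
  have hac : (m : ℝ) ≤ m' := by exact_mod_cast hmm
  have hcN : (m' : ℝ) < n := by exact_mod_cast hmn
  generalize (m : ℝ) = a at *
  generalize (m' : ℝ) = c at *
  generalize (n : ℝ) = N at *
  have hc : 0 < c := ha.trans_le hac
  have hN : 0 < N := hc.trans hcN
  have hNa : 0 < N - a := by linarith
  have hNc : 0 < N - c := by linarith
  simp only [sqrt_div' _ (mul_pos hN ha).le, sqrt_div' _ (mul_pos hN hc).le,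
    sqrt_div' _ (mul_pos hN hNa).le, sqrt_div' _ (mul_pos hN hNc).le, sqrt_div' _ hc.le,
    sqrt_div' _ hNa.le, sqrt_mul hN.le]
  have qN : √N ^ 2 = N := sq_sqrt hN.le
  have qa : √a ^ 2 = a := sq_sqrt ha.le
  have qc : √c ^ 2 = c := sq_sqrt hc.le
  have qNa : √(N - a) ^ 2 = N - a := sq_sqrt hNa.le
  have qNc : √(N - c) ^ 2 = N - c := sq_sqrt hNc.le
  field_simp
  rw [qN, qa, qc, qNa, qNc]
  ring

theorem stmt_2_general (n m m' : ℕ) (b : ℝ) (k l : ℕ) (hb : 1 < b)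
    (hmk : (m : ℝ) = b ^ k) (hml : (m' : ℝ) = b ^ l)
    (hmm : m ≤ m') (hmn : m' < n)
    (θk θl : Fin n → ℝ)
    (hθk : ∀ t : Fin n, θk t =
      if (t : ℕ) < m then Real.sqrt (((n : ℝ) - m) / (n * m))
      else - Real.sqrt ((m : ℝ) / (n * ((n : ℝ) - m))))
    (hθl : ∀ t : Fin n, θl t =
      if (t : ℕ) < m' then Real.sqrt (((n : ℝ) - m') / (n * m'))
      else - Real.sqrt ((m' : ℝ) / (n * ((n : ℝ) - m')))) :
    ∑ t : Fin n, θk t * θl t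
        = b ^ (((k : ℝ) - l) / 2) * Real.sqrt (((n : ℝ) - b ^ l) / ((n : ℝ) - b ^ k))
      ∧ ∑ t : Fin n, θk t * θl t ≤ b ^ (-(|(k : ℝ) - l|) / 2) := by
  have hb0 : 0 < b := one_pos.trans hb
  have hm : 0 < m := by exact_mod_cast hmk ▸ pow_pos hb0 k
  have hkl : k ≤ l := (pow_le_pow_iff_right₀ hb).mp (hmk ▸ hml ▸ by exact_mod_cast hmm)
  have hsum : ∑ t : Fin n, θk t * θl t
      = ∑ t ∈ range n, changepointContrast n m t * changepointContrast n m' t := by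
    rw [← Fin.sum_univ_eq_sum_range]
    simp only [hθk, hθl, changepointContrast]
  have hpow : b ^ (((k : ℝ) - l) / 2) = √((m : ℝ) / m') := by
    rw [hmk, hml, ← rpow_natCast, ← rpow_natCast, ← rpow_sub hb0, sqrt_eq_rpow,
      ← rpow_mul hb0.le, mul_one_div]
  have hfirst : ∑ t : Fin n, θk t * θl t
      = b ^ (((k : ℝ) - l) / 2) * √(((n : ℝ) - b ^ l) / ((n : ℝ) - b ^ k)) := by
    rw [hsum, sum_changepointContrast_mul hm hmm hmn, hpow, hmk, hml]
  refine ⟨hfirst, ?_⟩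
  have hkl' : (k : ℝ) - l ≤ 0 := by simp [hkl]
  rw [hfirst, abs_of_nonpos hkl', neg_neg, ← hmk, ← hml]
  refine mul_le_of_le_one_right (rpow_nonneg hb0.le _) (sqrt_le_one.mpr ?_)
  have hcN : (m' : ℝ) < n := by exact_mod_cast hmn
  have hac : (m : ℝ) ≤ m' := by exact_mod_cast hmm
  exact div_le_one_of_le₀ (by linarith) (by linarith)

/-- For two changepoint contrast vectors `θk, θl ∈ ℝ^n` with changepoint locations
`m = b^k ≤ m' = b^l` (integers strictly between `0` and `n`, `b > 1`), the inner
product equals `b^{(k-l)/2} √((n-b^l)/(n-b^k))`, and in particular is at most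
`b^{-|k-l|/2}`. -/
theorem stmt_2 (n m m' : ℕ) (b : ℝ) (k l : ℕ) (hb : 1 < b)
    (hmk : (m : ℝ) = b ^ k) (hml : (m' : ℝ) = b ^ l)
    (hm : 1 ≤ m) (hmm : m ≤ m') (hmn : m' < n)
    (θk θl : Fin n → ℝ)
    (hθk : ∀ t : Fin n, θk t =
      if (t : ℕ) < m then Real.sqrt (((n : ℝ) - m) / (n * m))
      else - Real.sqrt ((m : ℝ) / (n * ((n : ℝ) - m))))
    (hθl : ∀ t : Fin n, θl t =
      if (t : ℕ) < m' then Real.sqrt (((n : ℝ) - m') / (n * m'))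
      else - Real.sqrt ((m' : ℝ) / (n * ((n : ℝ) - m')))) :
    ∑ t : Fin n, θk t * θl t
        = b ^ (((k : ℝ) - l) / 2) * Real.sqrt (((n : ℝ) - b ^ l) / ((n : ℝ) - b ^ k))
      ∧ ∑ t : Fin n, θk t * θl t ≤ b ^ (-(|(k : ℝ) - l|) / 2) :=
  stmt_2_general n m m' b k l hb hmk hml hmm hmn θk θl hθk hθl
end

section
/- Let p_(1) be the minimum of n > 2 independent Uniform(0,1) random variables, and let K(x,t) = x log(x/t) + (1−x) log((1−x)/(1−t)). Then for every s > 0, P(n·K(1/n, p_(1)) > s) ≤ (1 + 9/e)·e^{−s}. -/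
open MeasureTheory ProbabilityTheory Finset

/-! The event `n K(1/n, p₍₁₎) > s` forces `p₍₁₎` out of the interval
`[e^{-s}/n, 1 - e^{-s/n})`: below `1/n` the term `n · (1/n) log(1/(n t))` is the only positive
part of `n K(1/n, t)`, and above `1/n` one has `K(1/n, t) ≤ -log(1 - t)`. A union bound gives
`P(p₍₁₎ < e^{-s}/n) ≤ e^{-s}`, and independence gives `P(p₍₁₎ ≥ 1 - e^{-s/n}) = e^{-s}`, so the
probability is at most `2 e^{-s} ≤ (1 + 9/e) e^{-s}`. -/

open Real

noncomputable def bernoulliKL (x t : ℝ) : ℝ :=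
  x * log (x / t) + (1 - x) * log ((1 - x) / (1 - t))

lemma bernoulliKL_le_of_le {x t : ℝ} (hx : x ≤ 1) (htx : t ≤ x) (ht : t < 1) :
    bernoulliKL x t ≤ x * log (x / t) := by
  have h1t : 0 < 1 - t := by linarith
  have hlog : log ((1 - x) / (1 - t)) ≤ 0 :=
    log_nonpos (div_nonneg (by linarith) h1t.le) ((div_le_one h1t).2 (by linarith))
  unfold bernoulliKL
  nlinarith

lemma bernoulliKL_le_neg_log_one_sub {x t : ℝ} (hx : 0 ≤ x) (hxt : x < t) (ht : t < 1) :
    bernoulliKL x t ≤ -log (1 - t) := by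
  have ht0 : 0 < t := hx.trans_lt hxt
  have hfirst : x * log (x / t) ≤ 0 :=
    mul_nonpos_of_nonneg_of_nonpos hx (log_nonpos (by positivity) ((div_le_one ht0).2 hxt.le))
  have hsplit : log ((1 - x) / (1 - t)) = log (1 - x) - log (1 - t) :=
    log_div (by linarith) (by linarith)
  have hlogx : log (1 - x) ≤ 0 := log_nonpos (by linarith) (by linarith)
  have hlogt : log (1 - t) ≤ 0 := log_nonpos (by linarith) (by linarith)
  unfold bernoulliKL
  rw [hsplit]
  nlinarith

lemma nat_mul_bernoulliKL_le {n : ℕ} (hn : 0 < n) {s t : ℝ} (hat : exp (-s) / n ≤ t)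
    (htb : t < 1 - exp (-s / n)) : n * bernoulliKL (1 / n) t ≤ s := by
  have hn' : (0 : ℝ) < n := by exact_mod_cast hn
  have ht0 : 0 < t := (by positivity : 0 < exp (-s) / n).trans_le hat
  have ht1 : t < 1 := htb.trans_le (by linarith [exp_pos (-s / n)])
  rcases le_or_gt t (1 / n) with htn | htn
  · calc n * bernoulliKL (1 / n) t ≤ n * (1 / n * log (1 / n / t)) := by
          gcongr
          exact bernoulliKL_le_of_le (by rw [div_le_one hn']; exact_mod_cast hn) htn ht1
      _ = log (1 / n / t) := by field_simp
      _ ≤ s := by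
          rw [log_le_iff_le_exp (by positivity), div_le_iff₀ ht0]
          calc 1 / (n : ℝ) = exp s * (exp (-s) / n) := by rw [exp_neg]; field_simp
            _ ≤ exp s * t := by gcongr
  · have hlog : -s / n < log (1 - t) := by rw [lt_log_iff_exp_lt (by linarith)]; linarith
    calc n * bernoulliKL (1 / n) t ≤ n * -log (1 - t) := by
          gcongr
          exact bernoulliKL_le_neg_log_one_sub (by positivity) htn ht1
      _ ≤ s := by
          rw [div_lt_iff₀ hn'] at hlog
          linarith

namespace ProbabilityTheory

section iInf

variable {Ω ι : Type*} [MeasurableSpace Ω] {P : Measure Ω} [Fintype ι] [Nonempty ι]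
  {X : ι → Ω → ℝ}

lemma measure_iInf_lt_le_sum (a : ℝ) :
    P {ω | ⨅ i, X i ω < a} ≤ ∑ i, P {ω | X i ω < a} :=
  calc P {ω | ⨅ i, X i ω < a} ≤ P (⋃ i, {ω | X i ω < a}) :=
        measure_mono fun _ hω => by simpa using exists_lt_of_ciInf_lt hω
    _ ≤ ∑ i, P {ω | X i ω < a} := measure_iUnion_fintype_le P _

lemma iIndepFun.measure_le_iInf_eq_prod (h : iIndepFun X P) (b : ℝ) :
    P {ω | b ≤ ⨅ i, X i ω} = ∏ i, P {ω | b ≤ X i ω} := by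
  have hset : {ω | b ≤ ⨅ i, X i ω} = ⋂ i ∈ (univ : Finset ι), X i ⁻¹' Set.Ici b := by
    ext ω
    simp [le_ciInf_iff (Set.finite_range _).bddBelow]
  rw [hset, h.measure_inter_preimage_eq_mul univ fun _ _ => measurableSet_Ici]
  rfl

end iInf

section Uniform

variable {Ω : Type*} [MeasurableSpace Ω] {P : Measure Ω} {X : Ω → ℝ}

lemma HasLaw.measure_lt_le_of_uniform (hX : HasLaw X (volume.restrict (Set.Ioc 0 1)) P)
    (a : ℝ) : P {ω | X ω < a} ≤ ENNReal.ofReal a := by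
  rw [hX.measure_eq measurableSet_Iio, Measure.restrict_apply' measurableSet_Ioc]
  calc volume ({x : ℝ | x < a} ∩ Set.Ioc 0 1) ≤ volume (Set.Ioo 0 a) :=
        measure_mono fun x hx => ⟨hx.2.1, hx.1⟩
    _ = ENNReal.ofReal a := by rw [volume_Ioo, sub_zero]

lemma HasLaw.measure_ge_le_of_uniform (hX : HasLaw X (volume.restrict (Set.Ioc 0 1)) P)
    (b : ℝ) : P {ω | b ≤ X ω} ≤ ENNReal.ofReal (1 - b) := by
  rw [hX.measure_eq measurableSet_Ici, Measure.restrict_apply' measurableSet_Ioc]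
  calc volume ({x : ℝ | b ≤ x} ∩ Set.Ioc 0 1) ≤ volume (Set.Icc b 1) :=
        measure_mono fun x hx => ⟨hx.1, hx.2.2⟩
    _ = ENNReal.ofReal (1 - b) := volume_Icc

end Uniform

end ProbabilityTheory

theorem stmt_5_general {Ω : Type*} [MeasurableSpace Ω] (P : Measure Ω)
    (n : ℕ) (U : Fin n → Ω → ℝ)
    (hindep : iIndepFun U P)
    (hunif : ∀ i, Measure.map (U i) P = volume.restrict (Set.Ioc (0:ℝ) 1))
    (K : ℝ → ℝ → ℝ)
    (hK : ∀ x t, K x t = x * Real.log (x / t) + (1 - x) * Real.log ((1 - x) / (1 - t)))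
    (s : ℝ) (hs : 0 < s) :
    P {ω | (n : ℝ) * K (1 / n) (⨅ i : Fin n, U i ω) > s}
      ≤ ENNReal.ofReal ((1 + 9 / Real.exp 1) * Real.exp (-s)) := by
  rcases Nat.eq_zero_or_pos n with rfl | hn0
  · simp [hs.le.not_gt]
  have : Nonempty (Fin n) := ⟨⟨0, hn0⟩⟩
  obtain rfl : K = bernoulliKL := funext₂ hK
  have hlaw i : HasLaw (U i) (volume.restrict (Set.Ioc 0 1)) P :=
    ⟨.of_map_ne_zero (by simp [hunif i]), hunif i⟩
  set a := exp (-s) / n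
  set b := 1 - exp (-s / n)
  have hsub : {ω | (n : ℝ) * bernoulliKL (1 / n) (⨅ i, U i ω) > s}
      ⊆ {ω | ⨅ i, U i ω < a} ∪ {ω | b ≤ ⨅ i, U i ω} := by
    intro ω hω
    by_contra hout
    simp only [Set.mem_union, Set.mem_ofPred_eq, not_or, not_lt, not_le] at hout
    exact (nat_mul_bernoulliKL_le hn0 hout.1 hout.2).not_gt hω
  calc P {ω | (n : ℝ) * bernoulliKL (1 / n) (⨅ i, U i ω) > s}
      ≤ P {ω | ⨅ i, U i ω < a} + P {ω | b ≤ ⨅ i, U i ω} :=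
        (measure_mono hsub).trans (measure_union_le _ _)
    _ ≤ ∑ _i : Fin n, ENNReal.ofReal a + ∏ _i : Fin n, ENNReal.ofReal (1 - b) := by
        rw [hindep.measure_le_iInf_eq_prod]
        gcongr with i
        · exact (measure_iInf_lt_le_sum a).trans
            (sum_le_sum fun j _ => (hlaw j).measure_lt_le_of_uniform a)
        · exact (hlaw i).measure_ge_le_of_uniform b
    _ = ENNReal.ofReal (n * a) + ENNReal.ofReal (exp (-s / n) ^ n) := by
        simp only [sum_const, prod_const, card_univ, Fintype.card_fin, nsmul_eq_mul, b,
          sub_sub_cancel]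
        rw [ENNReal.ofReal_mul (by positivity), ENNReal.ofReal_natCast,
          ENNReal.ofReal_pow (by positivity)]
    _ = ENNReal.ofReal (exp (-s) + exp (-s)) := by
        rw [ENNReal.ofReal_add (by positivity) (by positivity), ← exp_nat_mul,
          mul_div_cancel₀ _ (by positivity), mul_div_cancel₀ _ (by positivity)]
    _ ≤ ENNReal.ofReal ((1 + 9 / exp 1) * exp (-s)) := by
        gcongr
        have : 1 ≤ 9 / exp 1 := by rw [le_div_iff₀ (exp_pos 1)]; linarith [exp_one_lt_d9]
        nlinarith [exp_pos (-s)]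

/-- Let `p₍₁₎` be the minimum of `n > 2` i.i.d. `Uniform(0,1)` random variables, and
`K(x,t) = x log(x/t) + (1-x) log((1-x)/(1-t))`. Then for every `s > 0`,
`P(n K(1/n, p₍₁₎) > s) ≤ (1 + 9/e) e^{-s}`. -/
theorem stmt_5 {Ω : Type*} [MeasurableSpace Ω] (P : Measure Ω) [IsProbabilityMeasure P]
    (n : ℕ) (hn : 2 < n) (U : Fin n → Ω → ℝ)
    (hmeas : ∀ i, Measurable (U i))
    (hindep : iIndepFun U P)
    (hunif : ∀ i, Measure.map (U i) P = volume.restrict (Set.Ioc (0:ℝ) 1))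
    (K : ℝ → ℝ → ℝ)
    (hK : ∀ x t, K x t = x * Real.log (x / t) + (1 - x) * Real.log ((1 - x) / (1 - t)))
    (s : ℝ) (hs : 0 < s) :
    P {ω | (n : ℝ) * K (1 / n) (⨅ i : Fin n, U i ω) > s}
      ≤ ENNReal.ofReal ((1 + 9 / Real.exp 1) * Real.exp (-s)) :=
  stmt_5_general P n U hindep hunif K hK s hs
end

section
/- For x, t ∈ (0,1) with x/t ≤ 4, the Bernoulli KL divergence satisfies K(x,t) ≥ (x−t)^2/(9t). -/
/-!
From `log u ≥ 1 - 1/u` one gets `a log (a/b) ≥ a - b`. Applied to the two terms of `K(x,t)`, the first one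
after writing `x log (x/t) = 2 √x log (√x/√t)`, this gives the Hellinger bound `K(x,t) ≥ (√x - √t)²`.
Finally `(x - t)² = (√x - √t)² (√x + √t)²`, and `x ≤ 4t` gives `(√x + √t)² ≤ 9t`.
-/

open Real

lemma sub_le_mul_log_div {a b : ℝ} (ha : 0 < a) (hb : 0 < b) : a - b ≤ a * log (a / b) := by
  have h := one_sub_inv_le_log_of_pos (div_pos ha hb)
  rw [inv_div] at h
  calc a - b = a * (1 - b / a) := by field_simp
    _ ≤ a * log (a / b) := by gcongr

lemma sq_sqrt_sub_sqrt_le_bernoulli_kl {x t : ℝ} (hx : x ∈ Set.Ioo (0 : ℝ) 1)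
    (ht : t ∈ Set.Ioo (0 : ℝ) 1) :
    (√x - √t) ^ 2 ≤ x * log (x / t) + (1 - x) * log ((1 - x) / (1 - t)) := by
  obtain ⟨hx0, hx1⟩ := hx
  obtain ⟨ht0, ht1⟩ := ht
  have hsx := sq_sqrt hx0.le
  have hst := sq_sqrt ht0.le
  have first_eq : x * log (x / t) = 2 * (√x * (√x * log (√x / √t))) := by
    rw [← sqrt_div hx0.le, log_sqrt (div_nonneg hx0.le ht0.le)]
    linear_combination (-log (x / t)) * hsx
  have first_le : 2 * (√x * (√x - √t)) ≤ x * log (x / t) := by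
    rw [first_eq]
    gcongr
    exact sub_le_mul_log_div (sqrt_pos.2 hx0) (sqrt_pos.2 ht0)
  have second_le := sub_le_mul_log_div (sub_pos.2 hx1) (sub_pos.2 ht1)
  nlinarith

lemma sq_sub_le_nine_mul_sq_sqrt_sub_sqrt {x t : ℝ} (hx : 0 ≤ x) (ht : 0 ≤ t) (hxt : x ≤ 4 * t) :
    (x - t) ^ 2 ≤ 9 * t * (√x - √t) ^ 2 := by
  have hsx := sq_sqrt hx
  have hst := sq_sqrt ht
  have hsum : √x + √t ≤ 3 * √t := by
    have : √x ≤ 2 * √t := by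
      rw [show (4 : ℝ) * t = (2 * √t) ^ 2 by rw [mul_pow, hst]; norm_num] at hxt
      exact sqrt_le_iff.2 ⟨by positivity, hxt⟩
    linarith
  calc (x - t) ^ 2
      _ = (√x + √t) ^ 2 * (√x - √t) ^ 2 := by
        linear_combination (x - t + √x ^ 2 - √t ^ 2) * (hst - hsx)
      _ ≤ (3 * √t) ^ 2 * (√x - √t) ^ 2 := by gcongr
      _ = 9 * t * (√x - √t) ^ 2 := by rw [mul_pow, hst]; ring

/-- For `x, t ∈ (0,1)` with `x/t ≤ 4`, the Bernoulli KL divergence satisfies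
`K(x,t) ≥ (x-t)^2/(9t)`. -/
theorem stmt_8 (x t : ℝ) (hx : x ∈ Set.Ioo (0:ℝ) 1) (ht : t ∈ Set.Ioo (0:ℝ) 1)
    (hxt : x / t ≤ 4) :
    x * Real.log (x / t) + (1 - x) * Real.log ((1 - x) / (1 - t)) ≥ (x - t) ^ 2 / (9 * t) := by
  have ht0 : 0 < t := ht.1
  rw [div_le_iff₀ ht0] at hxt
  calc (x - t) ^ 2 / (9 * t) ≤ (√x - √t) ^ 2 := by
        rw [div_le_iff₀' (by positivity)]
        exact sq_sub_le_nine_mul_sq_sqrt_sub_sqrt hx.1.le ht0.le hxt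
    _ ≤ _ := sq_sqrt_sub_sqrt_le_bernoulli_kl hx ht
end

section
/- For every integer n > 2, ((1/n)/(1 − 2^{−1/(n−1)}))^{n/(n−1)} · ((n−1)/n)^n < 9/e. -/
/-!
Since `2 ^ x = exp (x log 2) ≥ 1 + x log 2` and `log 2 > 1/2`, we get `1 - 2 ^ (-x) ≥ x / 3` for
`0 ≤ x ≤ 1`. With `x = 1 / (n - 1)` the base of the first factor is at most `3 (n - 1) / n ≤ 3`,
and its exponent `n / (n - 1)` is below `2`, so the first factor is below `9`. The second factor
is `(1 - 1/n) ^ n ≤ 1/e`.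
-/

open Real

lemma div_three_le_one_sub_two_rpow_neg {x : ℝ} (hx₀ : 0 ≤ x) (hx₁ : x ≤ 1) :
    x / 3 ≤ 1 - 2 ^ (-x) := by
  have hlog : 1 / 2 < log 2 := by linarith [log_two_gt_d9]
  have hpow : 1 + x * log 2 ≤ 2 ^ x := by
    rw [rpow_def_of_pos two_pos]
    linarith [add_one_le_exp (log 2 * x)]
  have hinv : (2 : ℝ) ^ (-x) ≤ 1 - x / 3 :=
    calc (2 : ℝ) ^ (-x) = (2 ^ x)⁻¹ := rpow_neg zero_le_two x
      _ ≤ (1 + x * log 2)⁻¹ := inv_anti₀ (by positivity) hpow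
      _ ≤ 1 - x / 3 := by
        rw [inv_le_iff_one_le_mul₀ (by positivity)]
        nlinarith [mul_nonneg hx₀ (sub_nonneg.2 hx₁)]
  linarith

lemma one_div_div_one_sub_two_rpow_le_three {m : ℝ} (hm : 2 ≤ m) :
    (1 / m) / (1 - 2 ^ (-(1 / (m - 1)))) ≤ 3 := by
  have hx₀ : 0 < 1 / (m - 1) := one_div_pos.2 (by linarith)
  have hx₁ : 1 / (m - 1) ≤ 1 := by rw [div_le_one₀ (by linarith)]; linarith
  calc (1 / m) / (1 - 2 ^ (-(1 / (m - 1))))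
      ≤ (1 / m) / (1 / (m - 1) / 3) :=
        div_le_div_of_nonneg_left (by positivity) (by positivity)
          (div_three_le_one_sub_two_rpow_neg hx₀.le hx₁)
    _ = 3 * (m - 1) / m := by field_simp
    _ ≤ 3 := by rw [div_le_iff₀ (by linarith)]; linarith

/-- For every integer `n > 2`,
`((1/n)/(1 - 2^{-1/(n-1)}))^{n/(n-1)} · ((n-1)/n)^n < 9/e`. -/
theorem stmt_17 (n : ℕ) (hn : 2 < n) :
    ((1 / (n : ℝ)) / (1 - 2 ^ (-(1 / ((n : ℝ) - 1))))) ^ ((n : ℝ) / ((n : ℝ) - 1))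
        * (((n : ℝ) - 1) / n) ^ (n : ℕ) < 9 / Real.exp 1 := by
  have hn' : (2 : ℝ) < n := by exact_mod_cast hn
  set B := (1 / (n : ℝ)) / (1 - 2 ^ (-(1 / ((n : ℝ) - 1))))
  have hB₀ : 0 ≤ B := div_nonneg (by positivity) <| sub_nonneg.2 <|
    rpow_le_one_of_one_le_of_nonpos one_le_two (neg_nonpos.2 (one_div_pos.2 (by linarith)).le)
  have hexp : (n : ℝ) / (n - 1) < 2 := by rw [div_lt_iff₀ (by linarith)]; linarith
  have hfirst : B ^ ((n : ℝ) / (n - 1)) < 9 :=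
    calc B ^ ((n : ℝ) / (n - 1)) ≤ 3 ^ ((n : ℝ) / (n - 1)) :=
          rpow_le_rpow hB₀ (one_div_div_one_sub_two_rpow_le_three hn'.le)
            (div_nonneg (by positivity) (by linarith))
      _ < 3 ^ (2 : ℝ) := rpow_lt_rpow_of_exponent_lt (by norm_num) hexp
      _ = 9 := by norm_num
  have hsecond : (((n : ℝ) - 1) / n) ^ n ≤ exp (-1) := by
    rw [← one_sub_div (by positivity)]
    exact one_sub_div_pow_le_exp_neg (by linarith)
  calc B ^ ((n : ℝ) / (n - 1)) * (((n : ℝ) - 1) / n) ^ n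
      ≤ B ^ ((n : ℝ) / (n - 1)) * exp (-1) :=
        mul_le_mul_of_nonneg_left hsecond (rpow_nonneg hB₀ _)
    _ < 9 * exp (-1) := mul_lt_mul_of_pos_right hfirst (exp_pos _)
    _ = 9 / exp 1 := by rw [exp_neg, div_eq_mul_inv]
end
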